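/- arXiv:1605.04275 — 2 statements merged into one kernel-verified Lean document; each statement's English description precedes it below -/
import Mathlib

section
/- Let g be an entire function of exponential type with ∫_{-∞}^{∞} |g(t)|² |t|^α dt < ∞ for some α > -1. Then g belongs to the Cartwright class, i.e. ∫_{-∞}^{∞} log⁺|g(t)| / (1 + t²) dt < ∞. -/
open MeasureTheory Real

/-!
Since `log⁺ x ≤ x²` and `(1 + t²)⁻¹ ≤ |t|⁻¹ ≤ |t|^α` for `|t| ≥ 1`, the Cartwright integrand is
dominated by the weighted `L²` integrand off `[-1, 1]`, while on `[-1, 1]` it is bounded by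
continuity.
-/

theorem max_log_zero_le_sq {x : ℝ} (hx : 0 ≤ x) : max (log x) 0 ≤ x ^ 2 := by
  refine max_le ?_ (sq_nonneg x)
  rcases hx.eq_or_lt with rfl | hx
  · simp
  · nlinarith [log_le_sub_one_of_pos hx]

theorem inv_one_add_sq_le_abs_rpow {α t : ℝ} (hα : -1 ≤ α) (ht : 1 ≤ |t|) :
    (1 + t ^ 2)⁻¹ ≤ |t| ^ α :=
  calc (1 + t ^ 2)⁻¹ ≤ |t|⁻¹ := inv_anti₀ (by linarith) (by nlinarith [sq_abs t])
    _ = |t| ^ (-1 : ℝ) := (rpow_neg_one _).symm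
    _ ≤ |t| ^ α := rpow_le_rpow_of_exponent_le ht hα

theorem lintegral_max_log_norm_div_one_add_sq_lt_top {E : Type*} [NormedAddCommGroup E]
    {f : ℝ → E} (hf : Continuous f) {α : ℝ} (hα : -1 ≤ α)
    (hL2 : ∫⁻ t, ENNReal.ofReal (‖f t‖ ^ 2 * |t| ^ α) < ⊤) :
    ∫⁻ t, ENNReal.ofReal (max (log ‖f t‖) 0 / (1 + t ^ 2)) < ⊤ := by
  set I := Set.Icc (-1 : ℝ) 1
  have hdom : ∀ t, max (log ‖f t‖) 0 / (1 + t ^ 2) ≤ ‖f t‖ ^ 2 * (1 + t ^ 2)⁻¹ := fun t ↦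
    by rw [div_eq_mul_inv]; gcongr; exact max_log_zero_le_sq (norm_nonneg _)
  obtain ⟨B, hB⟩ := isCompact_Icc.exists_bound_of_continuousOn (hf.continuousOn (s := I))
  have hnear : ∫⁻ t in I, ENNReal.ofReal (max (log ‖f t‖) 0 / (1 + t ^ 2)) < ⊤ :=
    calc _ ≤ ∫⁻ _ in I, ENNReal.ofReal (B ^ 2) :=
          setLIntegral_mono measurable_const fun t ht ↦ ENNReal.ofReal_le_ofReal <|
            calc _ ≤ ‖f t‖ ^ 2 * (1 + t ^ 2)⁻¹ := hdom t
              _ ≤ ‖f t‖ ^ 2 :=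
                mul_le_of_le_one_right (by positivity) (inv_le_one_of_one_le₀ (by nlinarith))
              _ ≤ B ^ 2 := pow_le_pow_left₀ (norm_nonneg _) (hB t ht) 2
      _ = ENNReal.ofReal (B ^ 2) * volume I := setLIntegral_const _ _
      _ < ⊤ := ENNReal.mul_lt_top ENNReal.ofReal_lt_top measure_Icc_lt_top
  have hfar : ∫⁻ t in Iᶜ, ENNReal.ofReal (max (log ‖f t‖) 0 / (1 + t ^ 2)) < ⊤ := by
    refine lt_of_le_of_lt (setLIntegral_mono' measurableSet_Icc.compl fun t ht ↦
      ENNReal.ofReal_le_ofReal ?_) ((setLIntegral_le_lintegral _ _).trans_lt hL2)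
    have ht_abs : 1 ≤ |t| := by
      rw [Set.mem_compl_iff, Set.mem_Icc, ← abs_le, not_le] at ht
      exact ht.le
    exact (hdom t).trans (by gcongr; exact inv_one_add_sq_le_abs_rpow hα ht_abs)
  rw [← lintegral_add_compl _ measurableSet_Icc]
  exact ENNReal.add_lt_top.2 ⟨hnear, hfar⟩

theorem cartwright_of_weighted_L2_general
    (g : ℂ → ℂ) (hg : Differentiable ℂ g)
    (α : ℝ) (hα : -1 < α)
    (hL2 : (∫⁻ t : ℝ, ENNReal.ofReal (‖g t‖ ^ 2 * |t| ^ α)) < ⊤) :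
    (∫⁻ t : ℝ, ENNReal.ofReal
        (max (Real.log (‖g t‖)) 0 / (1 + t ^ 2))) < ⊤ :=
  lintegral_max_log_norm_div_one_add_sq_lt_top (hg.continuous.comp Complex.continuous_ofReal) hα.le hL2

/-- An entire function of exponential type with `∫ |g(t)|² |t|^α dt < ∞` for some
`α > -1` belongs to the Cartwright class: `∫ log⁺|g(t)|/(1+t²) dt < ∞`. -/
theorem cartwright_of_weighted_L2
    (g : ℂ → ℂ) (hg : Differentiable ℂ g)
    (htype : ∃ C > (0 : ℝ), ∃ σ : ℝ, ∀ z : ℂ,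
      ‖g z‖ ≤ C * Real.exp (σ * ‖z‖))
    (α : ℝ) (hα : -1 < α)
    (hL2 : (∫⁻ t : ℝ, ENNReal.ofReal (‖g t‖ ^ 2 * |t| ^ α)) < ⊤) :
    (∫⁻ t : ℝ, ENNReal.ofReal
        (max (Real.log (‖g t‖)) 0 / (1 + t ^ 2))) < ⊤ :=
  cartwright_of_weighted_L2_general g hg α hα hL2
end

section
/- Let μ be a measure on ℝ with Christoffel-Darboux kernel K_n and Christoffel function λ_n = 1/K_n(·,·), and suppose at points t_l < t_{l+1} < ... < t_k (zeros of ψ_n(x₀,·) = p_n(x₀)p_{n-1}(·) − p_n(·)p_{n-1}(x₀) centered around x₀) the Markov-Stieltjes inequalities hold: Σ_{j=l+1}^{k-1} 1/K_n(t_j,t_j) ≤ μ([t_l, t_k]) ≤ Σ_{j=l}^{k} 1/K_n(t_j,t_j). Then dividing by appropriate normalizations and passing to the limit under the assumptions that K_n(t_{jn},t_{jn})/K_n(x₀,x₀) → f(ρ_j,ρ_j) and n^{-(α+1)} K_n(x₀,x₀) → (π ω)^{α+1} 𝕃*_α(0,0)/w(x₀) with t_{jn} = x₀ + ρ_{jn}/(πωn),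 ρ_{jn} → ρ_j, yields Σ_{j=l+1}^{k-1} 1/f(ρ_j,ρ_j) ≤ 𝕃*_α(0,0) (ρ_k^{α+1} − ρ_l^{α+1})/(α+1) ≤ Σ_{j=l}^{k} 1/f(ρ_j,ρ_j). -/
/-!
Multiply the Markov–Stieltjes inequalities by `K_n(x₀,x₀)`; the outer sums become
`∑ K_n(x₀,x₀)/K_n(t_{jn},t_{jn}) → ∑ 1/f(ρ_j,ρ_j)`. The interval `[t_{ln}, t_{kn}]` shrinks to
`x₀`, where `w` is continuous, so its mass is `(w(x₀) + o(1)) ∫ |x - x₀|^α dx`, and the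
substitution `x = x₀ + s/(πωn)` turns that integral into `(πωn)^{-(α+1)} ∫_{ρ_{ln}}^{ρ_{kn}} |s|^α ds`.
With the asymptotics of `K_n(x₀,x₀)` the middle term therefore tends to
`𝕃*_α(0,0) (ρ_k^{α+1} − ρ_l^{α+1})/(α+1)`.
-/

open MeasureTheory Filter Real

/-- The entire factor `G_ν` of the Bessel function, so that `J_ν(x) = x^ν G_ν(x)`. -/
noncomputable def besselG (ν x : ℝ) : ℝ :=
  ∑' k : ℕ, ((-1 : ℝ) ^ k / (Nat.factorial k * Real.Gamma (ν + k + 1))) *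
    (x / 2) ^ (2 * k) * (2 : ℝ) ^ (-ν)

/-- The value `𝕃*_α(0,0)` of the normalized kernel at the origin. -/
noncomputable def besselLStarZero (α : ℝ) : ℝ :=
  besselG ((α + 1) / 2) 0 * besselG ((α - 1) / 2) 0 / 2

open Set Topology Asymptotics

noncomputable def absRpowPrimitive (α s : ℝ) : ℝ := s * |s| ^ α / (α + 1)

section AbsRpow

variable {α : ℝ}

lemma absRpowPrimitive_neg (s : ℝ) : absRpowPrimitive α (-s) = -absRpowPrimitive α s := by
  simp only [absRpowPrimitive, abs_neg]; ring

lemma absRpowPrimitive_of_nonneg (hα : -1 < α) {s : ℝ} (hs : 0 ≤ s) :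
    absRpowPrimitive α s = s ^ (α + 1) / (α + 1) := by
  rw [absRpowPrimitive, abs_of_nonneg hs, rpow_add' hs (by linarith), rpow_one, mul_comm]

lemma absRpowPrimitive_div (hα : -1 < α) (s : ℝ) {c : ℝ} (hc : 0 < c) :
    absRpowPrimitive α (s / c) = absRpowPrimitive α s / c ^ (α + 1) := by
  rw [absRpowPrimitive, absRpowPrimitive, abs_div, abs_of_pos hc, div_rpow (abs_nonneg s) hc.le,
    rpow_add' hc.le (by linarith), rpow_one]
  field_simp

lemma intervalIntegrable_abs_rpow_zero_of_nonneg (hα : -1 < α) {c : ℝ} (hc : 0 ≤ c) :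
    IntervalIntegrable (fun s : ℝ => |s| ^ α) volume 0 c :=
  (intervalIntegral.intervalIntegrable_rpow' hα).congr_ae <| by
    filter_upwards [ae_restrict_mem measurableSet_uIoc] with s hs
    rw [uIoc_of_le hc] at hs
    simp [abs_of_pos hs.1]

lemma intervalIntegrable_abs_rpow (hα : -1 < α) (a b : ℝ) :
    IntervalIntegrable (fun s : ℝ => |s| ^ α) volume a b := by
  have zero_left (c : ℝ) : IntervalIntegrable (fun s : ℝ => |s| ^ α) volume 0 c := by
    rcases le_total 0 c with hc | hc
    · exact intervalIntegrable_abs_rpow_zero_of_nonneg hα hc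
    · simpa using (IntervalIntegrable.iff_comp_neg).mp
        (intervalIntegrable_abs_rpow_zero_of_nonneg hα (neg_nonneg.2 hc))
  exact (zero_left a).symm.trans (zero_left b)

lemma integral_zero_abs_rpow (hα : -1 < α) (c : ℝ) :
    ∫ s in (0 : ℝ)..c, |s| ^ α = absRpowPrimitive α c := by
  have of_nonneg {c : ℝ} (hc : 0 ≤ c) : ∫ s in (0 : ℝ)..c, |s| ^ α = absRpowPrimitive α c := by
    rw [intervalIntegral.integral_congr (g := fun s => s ^ α) fun s hs => by
        rw [uIcc_of_le hc] at hs; simp [abs_of_nonneg hs.1],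
      integral_rpow (Or.inl hα), zero_rpow (by linarith), sub_zero,
      absRpowPrimitive_of_nonneg hα hc]
  rcases le_total 0 c with hc | hc
  · exact of_nonneg hc
  · have := intervalIntegral.integral_comp_neg (a := 0) (b := -c) fun s : ℝ => |s| ^ α
    simp only [abs_neg, neg_neg, neg_zero] at this
    rw [intervalIntegral.integral_symm, ← this, of_nonneg (neg_nonneg.2 hc),
      absRpowPrimitive_neg, neg_neg]

lemma integral_abs_rpow (hα : -1 < α) (a b : ℝ) :
    ∫ s in a..b, |s| ^ α = absRpowPrimitive α b - absRpowPrimitive α a := by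
  rw [← intervalIntegral.integral_interval_sub_left (intervalIntegrable_abs_rpow hα 0 b)
    (intervalIntegrable_abs_rpow hα 0 a), integral_zero_abs_rpow hα, integral_zero_abs_rpow hα]

lemma continuous_absRpowPrimitive (hα : -1 < α) : Continuous (absRpowPrimitive α) := by
  simpa only [integral_zero_abs_rpow hα] using
    intervalIntegral.continuous_primitive (intervalIntegrable_abs_rpow hα) 0

lemma setIntegral_Icc_abs_sub_rpow (hα : -1 < α) (x₀ : ℝ) {u v c : ℝ} (huv : u ≤ v)
    (hc : 0 < c) :
    ∫ x in Icc (x₀ + u / c) (x₀ + v / c), |x - x₀| ^ α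
      = (absRpowPrimitive α v - absRpowPrimitive α u) / c ^ (α + 1) := by
  have hle : x₀ + u / c ≤ x₀ + v / c := by gcongr
  rw [integral_Icc_eq_integral_Ioc, ← intervalIntegral.integral_of_le hle,
    intervalIntegral.integral_comp_sub_right (fun x => |x| ^ α), add_sub_cancel_left,
    add_sub_cancel_left, integral_abs_rpow hα, absRpowPrimitive_div hα _ hc,
    absRpowPrimitive_div hα _ hc, sub_div]

end AbsRpow

lemma abs_toReal_measure_sub_mul_setIntegral_le {X : Type*} [MeasurableSpace X]
    {μ ν : Measure X} {s t : Set X} {w ψ : X → ℝ} {c δ : ℝ}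
    (hμ : μ.restrict s = (ν.withDensity fun x => ENNReal.ofReal (w x * ψ x)).restrict s)
    (ht : MeasurableSet t) (hts : t ⊆ s) (hψ : ∀ x ∈ t, 0 ≤ ψ x) (hψi : IntegrableOn ψ t ν)
    (hc : 0 ≤ c) (hw : ∀ x ∈ t, |w x - c| ≤ δ) :
    |(μ t).toReal - c * ∫ x in t, ψ x ∂ν| ≤ δ * ∫ x in t, ψ x ∂ν := by
  have hμt : μ t = ∫⁻ x in t, ENNReal.ofReal (w x * ψ x) ∂ν := by
    rw [← Measure.restrict_eq_self μ hts, hμ, Measure.restrict_eq_self _ hts,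
      withDensity_apply _ ht]
  have hI : 0 ≤ ∫ x in t, ψ x ∂ν := setIntegral_nonneg ht hψ
  have lintegral_ofReal_const_mul (b : ℝ) (hb : ∀ x ∈ t, 0 ≤ b * ψ x) :
      ∫⁻ x in t, ENNReal.ofReal (b * ψ x) ∂ν = ENNReal.ofReal (b * ∫ x in t, ψ x ∂ν) := by
    rw [← integral_const_mul, ofReal_integral_eq_lintegral_ofReal (hψi.const_mul b)
      ((ae_restrict_iff' ht).2 (ae_of_all _ hb))]
  have hcδ (x : X) (hx : x ∈ t) : 0 ≤ (c + δ) * ψ x :=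
    mul_nonneg (by linarith [(abs_nonneg _).trans (hw x hx)]) (hψ x hx)
  have upper : μ t ≤ ENNReal.ofReal ((c + δ) * ∫ x in t, ψ x ∂ν) := by
    rw [hμt, ← lintegral_ofReal_const_mul _ hcδ]
    refine setLIntegral_mono' ht fun x hx => ENNReal.ofReal_le_ofReal ?_
    exact mul_le_mul_of_nonneg_right (by linarith [(abs_le.1 (hw x hx)).2]) (hψ x hx)
  have lower : (c - δ) * ∫ x in t, ψ x ∂ν ≤ (μ t).toReal := by
    rcases lt_or_ge (c - δ) 0 with hneg | hnonneg
    · exact (mul_nonpos_of_nonpos_of_nonneg hneg.le hI).trans ENNReal.toReal_nonneg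
    rw [← ENNReal.ofReal_le_iff_le_toReal (ne_top_of_le_ne_top ENNReal.ofReal_ne_top upper),
      hμt, ← lintegral_ofReal_const_mul _ fun x hx => mul_nonneg hnonneg (hψ x hx)]
    refine setLIntegral_mono' ht fun x hx => ENNReal.ofReal_le_ofReal ?_
    exact mul_le_mul_of_nonneg_right (by linarith [(abs_le.1 (hw x hx)).1]) (hψ x hx)
  have upper' := ENNReal.toReal_le_of_le_ofReal
    (by simpa only [integral_const_mul] using setIntegral_nonneg ht hcδ) upper
  rw [add_mul] at upper'
  rw [sub_mul] at lower
  rw [abs_sub_le_iff]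
  constructor <;> linarith

lemma isLittleO_toReal_measure_Icc_sub_mul_setIntegral {ι : Type*} {F : Filter ι}
    {μ : Measure ℝ} {s : Set ℝ} {w ψ : ℝ → ℝ} {x₀ : ℝ} (hs : s ∈ 𝓝 x₀)
    (hμ : μ.restrict s = (volume.withDensity fun x => ENNReal.ofReal (w x * ψ x)).restrict s)
    (hw : ContinuousAt w x₀) (hw0 : 0 ≤ w x₀) (hψ : ∀ x, 0 ≤ ψ x)
    (hψi : ∀ a b, IntegrableOn ψ (Icc a b)) {a b : ι → ℝ}
    (ha : Tendsto a F (𝓝 x₀)) (hb : Tendsto b F (𝓝 x₀)) :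
    (fun i => (μ (Icc (a i) (b i))).toReal - w x₀ * ∫ x in Icc (a i) (b i), ψ x)
      =o[F] fun i => ∫ x in Icc (a i) (b i), ψ x := by
  refine IsLittleO.of_bound fun δ hδ => ?_
  have hU : s ∩ {x | |w x - w x₀| ≤ δ} ∈ 𝓝 x₀ :=
    inter_mem hs (hw.eventually (Metric.closedBall_mem_nhds _ hδ))
  filter_upwards [(ha.Icc hb).eventually (eventually_smallSets_subset.2 hU)] with i hi
  rw [Real.norm_eq_abs, Real.norm_eq_abs,
    abs_of_nonneg (setIntegral_nonneg measurableSet_Icc fun x _ => hψ x)]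
  exact abs_toReal_measure_sub_mul_setIntegral_le hμ measurableSet_Icc
    (hi.trans inter_subset_left) (fun x _ => hψ x) (hψi _ _) hw0 fun x hx => (hi hx).2

lemma tendsto_rpow_mul_toReal_measure_Icc {μ : Measure ℝ} {s : Set ℝ} {w : ℝ → ℝ}
    {x₀ α c u₀ v₀ : ℝ} {u v : ℕ → ℝ} (hα : -1 < α) (hs : s ∈ 𝓝 x₀)
    (hμ : μ.restrict s
      = (volume.withDensity fun x => ENNReal.ofReal (w x * |x - x₀| ^ α)).restrict s)
    (hw : ContinuousAt w x₀) (hw0 : 0 ≤ w x₀) (hc : 0 < c)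
    (hu : Tendsto u atTop (𝓝 u₀)) (hv : Tendsto v atTop (𝓝 v₀)) (huv : u₀ < v₀) :
    Tendsto (fun n : ℕ => (n : ℝ) ^ (α + 1) *
        (μ (Icc (x₀ + u n / (c * n)) (x₀ + v n / (c * n)))).toReal) atTop
      (𝓝 (w x₀ * ((absRpowPrimitive α v₀ - absRpowPrimitive α u₀) / c ^ (α + 1)))) := by
  set I : ℕ → ℝ := fun n =>
    ∫ x in Icc (x₀ + u n / (c * n)) (x₀ + v n / (c * n)), |x - x₀| ^ α
  have hscale : Tendsto (fun n : ℕ => (c * n)⁻¹) atTop (𝓝 0) :=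
    tendsto_inv_atTop_zero.comp (tendsto_natCast_atTop_atTop.const_mul_atTop hc)
  have to_x₀ {r : ℕ → ℝ} {r₀ : ℝ} (hr : Tendsto r atTop (𝓝 r₀)) :
      Tendsto (fun n : ℕ => x₀ + r n / (c * n)) atTop (𝓝 x₀) := by
    simpa [div_eq_mul_inv] using tendsto_const_nhds.add (hr.mul hscale)
  have hI : ∀ᶠ n : ℕ in atTop, (n : ℝ) ^ (α + 1) * I n
      = (absRpowPrimitive α (v n) - absRpowPrimitive α (u n)) / c ^ (α + 1) := by
    filter_upwards [eventually_gt_atTop 0, hu.eventually_lt hv huv] with n hn huvn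
    have hn' : (0 : ℝ) < n := by exact_mod_cast hn
    simp only [I]
    rw [setIntegral_Icc_abs_sub_rpow hα x₀ huvn.le (mul_pos hc hn'),
      mul_rpow hc.le n.cast_nonneg]
    have : (n : ℝ) ^ (α + 1) ≠ 0 := (rpow_pos_of_pos hn' _).ne'
    field_simp
  have hIlim : Tendsto (fun n : ℕ => (n : ℝ) ^ (α + 1) * I n) atTop
      (𝓝 ((absRpowPrimitive α v₀ - absRpowPrimitive α u₀) / c ^ (α + 1))) := by
    have hP := continuous_absRpowPrimitive hα
    refine Tendsto.congr' (EventuallyEq.symm hI) ?_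
    exact (((hP.tendsto _).comp hv).sub ((hP.tendsto _).comp hu)).div_const _
  have hψi (a b : ℝ) : IntegrableOn (fun x => |x - x₀| ^ α) (Icc a b) :=
    ((intervalIntegrable_iff').1 (by
      simpa using (intervalIntegrable_abs_rpow hα (a - x₀) (b - x₀)).comp_sub_right x₀)).mono_set
      Icc_subset_uIcc
  -- `n^{α+1} (μ_n - w(x₀) I_n) = o(n^{α+1} I_n)`, and `n^{α+1} I_n` is bounded
  have herr := (isLittleO_one_iff ℝ).1 <|
    ((isBigO_refl (fun n : ℕ => (n : ℝ) ^ (α + 1)) atTop).mul_isLittleO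
      (isLittleO_toReal_measure_Icc_sub_mul_setIntegral hs hμ hw hw0
        (fun x => rpow_nonneg (abs_nonneg _) _) hψi (to_x₀ hu) (to_x₀ hv))).trans_isBigO
      (hIlim.isBigO_one ℝ)
  have hlim := herr.add (hIlim.const_mul (w x₀))
  rw [zero_add] at hlim
  exact hlim.congr fun n => by ring

lemma tendsto_mul_sum_one_div {ι κ : Type*} {F : Filter κ} (S : Finset ι) {a : κ → ℝ}
    {b : κ → ι → ℝ} {g : ι → ℝ} (hb : ∀ j ∈ S, Tendsto (fun n => b n j / a n) F (𝓝 (g j)))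
    (hg : ∀ j ∈ S, g j ≠ 0) :
    Tendsto (fun n => a n * ∑ j ∈ S, 1 / b n j) F (𝓝 (∑ j ∈ S, 1 / g j)) := by
  have hlim := tendsto_finsetSum S fun j hj => (hb j hj).inv₀ (hg j hj)
  simp only [inv_div] at hlim
  simp only [Finset.mul_sum, mul_one_div]
  simpa only [one_div] using hlim

theorem markov_stieltjes_limit_general
    (μ : Measure ℝ)
    (x₀ : ℝ) (α : ℝ) (hα : -1 < α) (w : ℝ → ℝ)
    (hw : ContinuousAt w x₀) (hw0 : 0 < w x₀)
    (hdens : ∃ ε > (0 : ℝ), μ.restrict (Set.Ioo (x₀ - ε) (x₀ + ε))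
      = (volume.withDensity fun x =>
          ENNReal.ofReal (w x * |x - x₀| ^ α)).restrict (Set.Ioo (x₀ - ε) (x₀ + ε)))
    (ω : ℝ) (hω : 0 < ω)
    (Kn : ℕ → ℝ → ℝ → ℝ) (hKpos : ∀ n x, 0 < Kn n x x)
    (t : ℕ → ℤ → ℝ) (ρn : ℕ → ℤ → ℝ) (ρ : ℤ → ℝ) (f : ℝ → ℝ → ℝ)
    (l k : ℤ) (hlk : l < k)
    (ht : ∀ j ∈ Finset.Icc l k, ∀ n : ℕ,
      t n j = x₀ + ρn n j / (Real.pi * ω * n))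
    (hρconv : ∀ j ∈ Finset.Icc l k,
      Tendsto (fun n : ℕ => ρn n j) atTop (nhds (ρ j)))
    (h0l : 0 ≤ ρ l) (hρlk : ρ l < ρ k)
    (hMS : ∀ n : ℕ,
      (∑ j ∈ Finset.Ioo l k, 1 / Kn n (t n j) (t n j))
          ≤ (μ (Set.Icc (t n l) (t n k))).toReal ∧
      (μ (Set.Icc (t n l) (t n k))).toReal
          ≤ ∑ j ∈ Finset.Icc l k, 1 / Kn n (t n j) (t n j))
    (hf : ∀ j ∈ Finset.Icc l k, 0 < f (ρ j) (ρ j))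
    (hKconv : ∀ j ∈ Finset.Icc l k,
      Tendsto (fun n : ℕ => Kn n (t n j) (t n j) / Kn n x₀ x₀) atTop
        (nhds (f (ρ j) (ρ j))))
    (hKx0 : Tendsto (fun n : ℕ => Kn n x₀ x₀ / (n : ℝ) ^ (α + 1)) atTop
      (nhds ((Real.pi * ω) ^ (α + 1) * besselLStarZero α / w x₀))) :
    (∑ j ∈ Finset.Ioo l k, 1 / f (ρ j) (ρ j))
        ≤ besselLStarZero α * ((ρ k ^ (α + 1) - ρ l ^ (α + 1)) / (α + 1)) ∧
    besselLStarZero α * ((ρ k ^ (α + 1) - ρ l ^ (α + 1)) / (α + 1))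
        ≤ ∑ j ∈ Finset.Icc l k, 1 / f (ρ j) (ρ j) := by
  obtain ⟨ε, hε, hμ⟩ := hdens
  have hl : l ∈ Finset.Icc l k := Finset.left_mem_Icc.2 hlk.le
  have hk : k ∈ Finset.Icc l k := Finset.right_mem_Icc.2 hlk.le
  have hπω : 0 < π * ω := mul_pos pi_pos hω
  have hmass := tendsto_rpow_mul_toReal_measure_Icc hα
    (Ioo_mem_nhds (by linarith) (by linarith)) hμ hw hw0.le hπω (hρconv l hl) (hρconv k hk) hρlk
  rw [absRpowPrimitive_of_nonneg hα h0l, absRpowPrimitive_of_nonneg hα (h0l.trans hρlk.le),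
    ← sub_div] at hmass
  have hmid : Tendsto (fun n : ℕ => Kn n x₀ x₀ * (μ (Set.Icc (t n l) (t n k))).toReal) atTop
      (𝓝 (besselLStarZero α * ((ρ k ^ (α + 1) - ρ l ^ (α + 1)) / (α + 1)))) := by
    have hlim := hKx0.mul hmass
    have hπω' : (π * ω) ^ (α + 1) ≠ 0 := (rpow_pos_of_pos hπω _).ne'
    rw [show (π * ω) ^ (α + 1) * besselLStarZero α / w x₀ *
        (w x₀ * ((ρ k ^ (α + 1) - ρ l ^ (α + 1)) / (α + 1) / (π * ω) ^ (α + 1)))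
        = besselLStarZero α * ((ρ k ^ (α + 1) - ρ l ^ (α + 1)) / (α + 1)) by
      field_simp] at hlim
    refine hlim.congr' ?_
    filter_upwards [eventually_gt_atTop 0] with n hn
    have hn' : (n : ℝ) ^ (α + 1) ≠ 0 := (rpow_pos_of_pos (by exact_mod_cast hn) _).ne'
    rw [ht l hl, ht k hk]
    field_simp
  have hsum (S : Finset ℤ) (hS : S ⊆ Finset.Icc l k) :=
    tendsto_mul_sum_one_div S (fun j hj => hKconv j (hS hj)) fun j hj => (hf j (hS hj)).ne'
  exact ⟨le_of_tendsto_of_tendsto' (hsum _ Finset.Ioo_subset_Icc_self) hmid fun n =>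
      mul_le_mul_of_nonneg_left (hMS n).1 (hKpos n x₀).le,
    le_of_tendsto_of_tendsto' hmid (hsum _ subset_rfl) fun n =>
      mul_le_mul_of_nonneg_left (hMS n).2 (hKpos n x₀).le⟩

/-- Passing to the limit in the Markov–Stieltjes inequalities: if the rescaled
zeros `ρ_{jn} → ρ_j`, the diagonal kernel ratios converge to `f(ρ_j,ρ_j) > 0` and
`K_n(x₀,x₀)/n^{α+1} → (πω)^{α+1} 𝕃*_α(0,0)/w(x₀)`, then
`Σ_{j=l+1}^{k-1} 1/f(ρ_j,ρ_j) ≤ 𝕃*_α(0,0)(ρ_k^{α+1} − ρ_l^{α+1})/(α+1)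
  ≤ Σ_{j=l}^{k} 1/f(ρ_j,ρ_j)`. -/
theorem markov_stieltjes_limit
    (μ : Measure ℝ) [IsFiniteMeasure μ]
    (x₀ : ℝ) (α : ℝ) (hα : -1 < α) (w : ℝ → ℝ)
    (hw : ContinuousAt w x₀) (hw0 : 0 < w x₀)
    (hdens : ∃ ε > (0 : ℝ), μ.restrict (Set.Ioo (x₀ - ε) (x₀ + ε))
      = (volume.withDensity fun x =>
          ENNReal.ofReal (w x * |x - x₀| ^ α)).restrict (Set.Ioo (x₀ - ε) (x₀ + ε)))
    (ω : ℝ) (hω : 0 < ω)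
    (Kn : ℕ → ℝ → ℝ → ℝ) (hKpos : ∀ n x, 0 < Kn n x x)
    (t : ℕ → ℤ → ℝ) (ρn : ℕ → ℤ → ℝ) (ρ : ℤ → ℝ) (f : ℝ → ℝ → ℝ)
    (l k : ℤ) (hlk : l < k)
    (ht : ∀ j ∈ Finset.Icc l k, ∀ n : ℕ,
      t n j = x₀ + ρn n j / (Real.pi * ω * n))
    (hρconv : ∀ j ∈ Finset.Icc l k,
      Tendsto (fun n : ℕ => ρn n j) atTop (nhds (ρ j)))
    (hρmono : ∀ i ∈ Finset.Icc l k, ∀ j ∈ Finset.Icc l k, i ≤ j → ρ i ≤ ρ j)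
    (h0l : 0 ≤ ρ l) (hρlk : ρ l < ρ k)
    (hMS : ∀ n : ℕ,
      (∑ j ∈ Finset.Ioo l k, 1 / Kn n (t n j) (t n j))
          ≤ (μ (Set.Icc (t n l) (t n k))).toReal ∧
      (μ (Set.Icc (t n l) (t n k))).toReal
          ≤ ∑ j ∈ Finset.Icc l k, 1 / Kn n (t n j) (t n j))
    (hf : ∀ j ∈ Finset.Icc l k, 0 < f (ρ j) (ρ j))
    (hKconv : ∀ j ∈ Finset.Icc l k,
      Tendsto (fun n : ℕ => Kn n (t n j) (t n j) / Kn n x₀ x₀) atTop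
        (nhds (f (ρ j) (ρ j))))
    (hKx0 : Tendsto (fun n : ℕ => Kn n x₀ x₀ / (n : ℝ) ^ (α + 1)) atTop
      (nhds ((Real.pi * ω) ^ (α + 1) * besselLStarZero α / w x₀))) :
    (∑ j ∈ Finset.Ioo l k, 1 / f (ρ j) (ρ j))
        ≤ besselLStarZero α * ((ρ k ^ (α + 1) - ρ l ^ (α + 1)) / (α + 1)) ∧
    besselLStarZero α * ((ρ k ^ (α + 1) - ρ l ^ (α + 1)) / (α + 1))
        ≤ ∑ j ∈ Finset.Icc l k, 1 / f (ρ j) (ρ j) :=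
  markov_stieltjes_limit_general μ x₀ α hα w hw hw0 hdens ω hω Kn hKpos t ρn ρ f l k hlk ht hρconv
    h0l hρlk hMS hf hKconv hKx0
end
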